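/- In the finite one-dimensional screening problem, suppose the allocation vector x ∈ X^n is nondecreasing (x_1 ≤ x_2 ≤ ⋯ ≤ x_n), and define transfers by t_i = u(x_i, θ_i) − Σ_{j=1}^{i−1} (u(x_j, θ_{j+1}) − u(x_j, θ_j)). Then (x, t) satisfies all IC constraints (for all pairs i, j) and all IR constraints, and t is the unique maximizer of Σ_i μ(θ_i) t_i among all transfer vectors t ∈ ℝ^n such that (x, t) satisfies all downward IC constraints and all IR constraints. -/

import Mathlib

/-!
Write `R i = Σ_{m<i} (u(x_m, θ_{m+1}) − u(x_m, θ_m))`, so that type `i` gets utility `R i`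
under `t`. Telescoping, `R i − R j` and `u(x_j, θ_i) − u(x_j, θ_j)` are sums of the increments
over the same steps `[θ_m, θ_{m+1}]`, taken at `x_m` and at `x_j` respectively; increasing
differences and the monotonicity of `x` compare them termwise, which gives every IC constraint.
Conversely, the adjacent downward IC constraints and `IR[0]` force utility at least `R i` on
any feasible `t'`, i.e. `t' ≤ t` pointwise, so `t` maximizes revenue, uniquely since `μ > 0`.
-/

open Finset

noncomputable section

/-- Feasibility of a transfer vector `t` for a fixed allocation `x`: all downward IC
constraints and all IR constraints. Indices run over `0, …, n-1`. -/
def TFeas (n : ℕ) (u : ℝ → ℝ → ℝ) (θ : ℕ → ℝ) (x t : ℕ → ℝ) : Prop :=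
  (∀ i j, j < i → i < n → u (x i) (θ i) - t i ≥ u (x j) (θ i) - t j) ∧
    (∀ i, i < n → u (x i) (θ i) - t i ≥ 0)

/-- `informationRent w i` is the utility left to type `i` when allocation `k` is worth `w k a`
to type `a` and every downward adjacent IC constraint binds. -/
def informationRent (w : ℕ → ℕ → ℝ) (i : ℕ) : ℝ :=
  ∑ m ∈ range i, (w m (m + 1) - w m m)

section informationRent

variable {w : ℕ → ℕ → ℝ} {n : ℕ}

theorem informationRent_succ (m : ℕ) :
    informationRent w (m + 1) = informationRent w m + (w m (m + 1) - w m m) :=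
  sum_range_succ _ _

theorem informationRent_sub_eq_sum_Ico {i j : ℕ} (hji : j ≤ i) :
    informationRent w i - informationRent w j = ∑ m ∈ Ico j i, (w m (m + 1) - w m m) :=
  (sum_Ico_eq_sub _ hji).symm

theorem informationRent_nonneg (hw : ∀ m, m + 1 < n → w m m ≤ w m (m + 1)) {i : ℕ} (hi : i < n) :
    0 ≤ informationRent w i :=
  sum_nonneg fun m hm => sub_nonneg.2 (hw m (by have := mem_range.1 hm; omega))

theorem sub_le_informationRent_sub
    (hw : ∀ p q a, p ≤ q → q < n → a + 1 < n → w p (a + 1) - w p a ≤ w q (a + 1) - w q a)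
    {i j : ℕ} (hi : i < n) (hj : j < n) :
    w j i - w j j ≤ informationRent w i - informationRent w j := by
  rcases le_or_gt j i with hji | hij
  · calc w j i - w j j = ∑ m ∈ Ico j i, (w j (m + 1) - w j m) := (sum_Ico_sub _ hji).symm
      _ ≤ ∑ m ∈ Ico j i, (w m (m + 1) - w m m) :=
          sum_le_sum fun m hm => by
            obtain ⟨hjm, hmi⟩ := mem_Ico.1 hm
            exact hw j m m hjm (by omega) (by omega)
      _ = informationRent w i - informationRent w j := (informationRent_sub_eq_sum_Ico hji).symm
  · have : informationRent w j - informationRent w i ≤ w j j - w j i :=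
      calc informationRent w j - informationRent w i
          = ∑ m ∈ Ico i j, (w m (m + 1) - w m m) := informationRent_sub_eq_sum_Ico hij.le
        _ ≤ ∑ m ∈ Ico i j, (w j (m + 1) - w j m) :=
            sum_le_sum fun m hm => by
              obtain ⟨-, hmj⟩ := mem_Ico.1 hm
              exact hw m j m hmj.le hj (by omega)
        _ = w j j - w j i := sum_Ico_sub _ hij.le
    linarith

end informationRent

theorem sub_le_sub_of_strict_increasing_differences {X : Set ℝ} {u : ℝ → ℝ → ℝ}
    (hSID : ∀ x ∈ X, ∀ x' ∈ X, x < x' → ∀ a a' : ℝ, a < a' →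
      u x' a - u x a < u x' a' - u x a')
    {p q : ℝ} (hp : p ∈ X) (hq : q ∈ X) (hpq : p ≤ q) {a a' : ℝ} (ha : a ≤ a') :
    u q a - u p a ≤ u q a' - u p a' := by
  rcases hpq.eq_or_lt with rfl | hpq
  · simp
  rcases ha.eq_or_lt with rfl | ha
  · exact le_rfl
  exact (hSID p hp q hq hpq a a' ha).le

theorem informationRent_le_of_tFeas {n : ℕ} {u : ℝ → ℝ → ℝ} {θ x t : ℕ → ℝ}
    (hfeas : TFeas n u θ x t) {i : ℕ} (hi : i < n) :
    informationRent (fun k a => u (x k) (θ a)) i ≤ u (x i) (θ i) - t i := by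
  obtain ⟨hIC, hIR⟩ := hfeas
  induction i with
  | zero => simpa [informationRent] using hIR 0 hi
  | succ m ih =>
    have := hIC (m + 1) m m.lt_succ_self hi
    have := ih (by omega)
    rw [informationRent_succ]
    linarith

theorem eq_of_weighted_sum_eq {ι : Type*} {s : Finset ι} {μ f g : ι → ℝ}
    (hμ : ∀ i ∈ s, 0 < μ i) (hfg : ∀ i ∈ s, f i ≤ g i)
    (hsum : ∑ i ∈ s, μ i * f i = ∑ i ∈ s, μ i * g i) :
    ∀ i ∈ s, f i = g i := fun i hi =>
  mul_left_cancel₀ (hμ i hi).ne'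
    ((sum_eq_sum_iff_of_le fun j hj => mul_le_mul_of_nonneg_left (hfg j hj) (hμ j hj).le).1
      hsum i hi)

theorem stmt6
    (n : ℕ) (X : Set ℝ)
    (θ μ : ℕ → ℝ)
    (hθ : ∀ i j, i < j → j < n → θ i < θ j)
    (hμpos : ∀ i, i < n → 0 < μ i)
    (u : ℝ → ℝ → ℝ)
    (humono : ∀ x ∈ X, Monotone (u x))
    (hSID : ∀ x ∈ X, ∀ x' ∈ X, x < x' → ∀ a a' : ℝ, a < a' →
      u x' a - u x a < u x' a' - u x a')
    (x : ℕ → ℝ) (hxX : ∀ i, i < n → x i ∈ X)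
    (hxmono : ∀ i j, i ≤ j → j < n → x i ≤ x j)
    (t : ℕ → ℝ)
    (ht : ∀ i, i < n →
      t i = u (x i) (θ i) - ∑ j ∈ range i, (u (x j) (θ (j + 1)) - u (x j) (θ j))) :
    (∀ i j, i < n → j < n → u (x i) (θ i) - t i ≥ u (x j) (θ i) - t j) ∧
    (∀ i, i < n → u (x i) (θ i) - t i ≥ 0) ∧
    (∀ t' : ℕ → ℝ, TFeas n u θ x t' →
      ∑ i ∈ range n, μ i * t' i ≤ ∑ i ∈ range n, μ i * t i) ∧
    (∀ t' : ℕ → ℝ, TFeas n u θ x t' →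
      ∑ i ∈ range n, μ i * t' i = ∑ i ∈ range n, μ i * t i →
      ∀ i, i < n → t' i = t i) := by
  set w : ℕ → ℕ → ℝ := fun k a => u (x k) (θ a)
  have hθstep : ∀ m, m + 1 < n → θ m ≤ θ (m + 1) := fun m hm => (hθ m _ m.lt_succ_self hm).le
  have hw : ∀ p q a, p ≤ q → q < n → a + 1 < n → w p (a + 1) - w p a ≤ w q (a + 1) - w q a :=
    fun p q a hpq hq ha => by
      have := sub_le_sub_of_strict_increasing_differences hSID (hxX p (by omega)) (hxX q hq)
        (hxmono p q hpq hq) (hθstep a ha)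
      linarith
  have hutil : ∀ i, i < n → u (x i) (θ i) - t i = informationRent w i := fun i hi => by
    rw [ht i hi, sub_sub_cancel]; rfl
  have hle : ∀ t', TFeas n u θ x t' → ∀ i ∈ range n, t' i ≤ t i := fun t' hfeas i hi => by
    have := informationRent_le_of_tFeas hfeas (mem_range.1 hi)
    have := hutil i (mem_range.1 hi)
    linarith
  refine ⟨fun i j hi hj => ?_, fun i hi => ?_, fun t' hfeas => ?_, fun t' hfeas hsum i hi => ?_⟩
  · have := sub_le_informationRent_sub hw hi hj
    have := hutil j hj
    linarith [hutil i hi]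
  · exact (hutil i hi).symm ▸ informationRent_nonneg
      (fun m hm => humono _ (hxX m (by omega)) (hθstep m hm)) hi
  · exact sum_le_sum fun i hi =>
      mul_le_mul_of_nonneg_left (hle t' hfeas i hi) (hμpos i (mem_range.1 hi)).le
  · exact eq_of_weighted_sum_eq (fun i hi => hμpos i (mem_range.1 hi)) (hle t' hfeas) hsum i
      (mem_range.2 hi)
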